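/- For x ≠ 0, (2π)^{−1} ∫_{−2}^{2} (1/2)√(2−|ξ|) e^{ixξ} dξ = (8π)^{−1/2} |x|^{−3/2} ( −cos(2|x|) S(2√|x|/√π) + sin(2|x|) C(2√|x|/√π) ), where S and C are the Fresnel integrals S(z) = ∫_0^z sin(πt²/2)dt, C(z) = ∫_0^z cos(πt²/2)dt. In particular, this inverse Fourier transform of √(f̂) with f̂(ξ) = (1/4)max(2−|ξ|,0) takes both positive and negative values. -/

import Mathlib

open Real MeasureTheory Complex intervalIntegral

noncomputable def fresnelS (z : ℝ) : ℝ := ∫ t in (0:ℝ)..z, Real.sin (Real.pi * t ^ 2 / 2)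

noncomputable def fresnelC (z : ℝ) : ℝ := ∫ t in (0:ℝ)..z, Real.cos (Real.pi * t ^ 2 / 2)

noncomputable def invFourierSqrtTriangle (x : ℝ) : ℝ :=
  (8 * Real.pi) ^ (-(1:ℝ)/2) * |x| ^ (-(3:ℝ)/2) *
    (-Real.cos (2 * |x|) * fresnelS (2 * Real.sqrt |x| / Real.sqrt Real.pi)
      + Real.sin (2 * |x|) * fresnelC (2 * Real.sqrt |x| / Real.sqrt Real.pi))

/-! For `x > 0` the even integrand reduces the transform to `(2π)⁻¹ ∫₀² √(2 - ξ) cos (x ξ) dξ`.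
The substitution `ξ = 2 - π t² / (2x)` turns this into a multiple of
`∫₀^z t² cos (π z²/2 - π t²/2) dt` with `z = 2√x/√π`, and integrating `t · (t cos …)` by parts
leaves only Fresnel integrals. The sign change comes from `fresnelS √2 > 0` and `fresnelS 2 > 0`,
which give the values at `x = π/2` and `x = π`. -/

theorem hasDerivAt_fresnelS (z : ℝ) : HasDerivAt fresnelS (Real.sin (π * z ^ 2 / 2)) z :=
  integral_hasDerivAt_right ((by fun_prop : Continuous _).intervalIntegrable _ _)
    (by fun_prop : Continuous _).aestronglyMeasurable.stronglyMeasurableAtFilter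
    (by fun_prop : Continuous _).continuousAt

theorem hasDerivAt_fresnelC (z : ℝ) : HasDerivAt fresnelC (Real.cos (π * z ^ 2 / 2)) z :=
  integral_hasDerivAt_right ((by fun_prop : Continuous _).intervalIntegrable _ _)
    (by fun_prop : Continuous _).aestronglyMeasurable.stronglyMeasurableAtFilter
    (by fun_prop : Continuous _).continuousAt

/- The phase `π z² / 2` is tied to the endpoint so that the boundary terms `± z sin a cos a` of the
primitive `F` cancel at `t = z`. -/
theorem integral_sq_mul_cos_sub_eq_fresnel (z : ℝ) :
    ∫ t in (0:ℝ)..z, t ^ 2 * Real.cos (π * z ^ 2 / 2 - π * t ^ 2 / 2)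
      = (Real.sin (π * z ^ 2 / 2) * fresnelC z - Real.cos (π * z ^ 2 / 2) * fresnelS z) / π := by
  set a := π * z ^ 2 / 2
  let F : ℝ → ℝ := fun t => (Real.cos a * (t * Real.sin (π * t ^ 2 / 2) - fresnelS t)
      + Real.sin a * (fresnelC t - t * Real.cos (π * t ^ 2 / 2))) / π
  have hF : ∀ t, HasDerivAt F (t ^ 2 * Real.cos (a - π * t ^ 2 / 2)) t := by
    intro t
    have hq : HasDerivAt (fun t : ℝ => π * t ^ 2 / 2) (π * t) t := by
      refine (((hasDerivAt_pow 2 t).const_mul π).div_const 2).congr_deriv ?_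
      norm_num
      ring
    refine (((((hasDerivAt_id t).mul hq.sin).sub (hasDerivAt_fresnelS t)).const_mul (Real.cos a)
      |>.add (((hasDerivAt_fresnelC t).sub ((hasDerivAt_id t).mul hq.cos)).const_mul
        (Real.sin a))).div_const π).congr_deriv ?_
    rw [Real.cos_sub]
    field_simp
    simp only [id]
    ring
  rw [integral_eq_sub_of_hasDerivAt (fun t _ => hF t)
    ((by fun_prop : Continuous _).intervalIntegrable _ _)]
  simp only [F, fresnelS, fresnelC, integral_same]
  ring

theorem integral_sqrt_sub_mul_eq_integral_sq_mul {g : ℝ → ℝ} (hg : Continuous g) (b : ℝ)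
    {c z : ℝ} (hc : 0 < c) (hz : 0 ≤ z) :
    ∫ ξ in b - c * z ^ 2..b, √(b - ξ) * g ξ
      = 2 * c * √c * ∫ t in (0:ℝ)..z, t ^ 2 * g (b - c * t ^ 2) := by
  have hφ : ∀ t ∈ Set.uIcc 0 z, HasDerivAt (fun t => b - c * t ^ 2) (-(2 * c * t)) t := by
    intro t _
    refine ((hasDerivAt_const t b).sub ((hasDerivAt_pow 2 t).const_mul c)).congr_deriv ?_
    norm_num
    ring
  have hsub := integral_comp_mul_deriv hφ (by fun_prop)
    (by fun_prop : Continuous fun ξ => √(b - ξ) * g ξ)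
  simp only [Function.comp_def, sub_sub_cancel, zero_pow two_ne_zero, mul_zero, sub_zero] at hsub
  rw [integral_symm, ← hsub, ← intervalIntegral.integral_neg,
    ← intervalIntegral.integral_const_mul]
  refine integral_congr fun t ht => ?_
  have ht : 0 ≤ t := by rw [Set.uIcc_of_le hz] at ht; exact ht.1
  simp only [Real.sqrt_mul hc.le, Real.sqrt_sq ht]
  ring

theorem integral_comp_abs_mul_exp_eq {f : ℝ → ℝ} (hf : Continuous f) {a : ℝ} (ha : 0 ≤ a)
    (x : ℝ) :
    ∫ ξ in -a..a, (f |ξ| : ℂ) * exp (I * x * ξ)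
      = 2 * ((∫ ξ in (0:ℝ)..a, f ξ * Real.cos (x * ξ) : ℝ) : ℂ) := by
  set G : ℝ → ℂ := fun ξ => (f |ξ| : ℂ) * exp (I * x * ξ)
  have hG : Continuous G := by fun_prop
  rw [← integral_add_adjacent_intervals (hG.intervalIntegrable (-a) 0)
      (hG.intervalIntegrable 0 a), ← neg_zero, ← integral_comp_neg, neg_zero,
    ← integral_add (f := fun ξ => G (-ξ)) ((hG.comp continuous_neg).intervalIntegrable 0 a)
      (hG.intervalIntegrable 0 a), ← integral_ofReal, ← intervalIntegral.integral_const_mul]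
  refine integral_congr fun ξ hξ => ?_
  have hξ : 0 ≤ ξ := by rw [Set.uIcc_of_le ha] at hξ; exact hξ.1
  simp only [G, abs_neg, abs_of_nonneg hξ, ofReal_mul, ofReal_cos, Complex.cos, ofReal_neg]
  ring_nf

theorem inv_two_pi_mul_integral_sqrt_two_sub_mul_cos {x : ℝ} (hx : 0 < x) :
    (2 * π)⁻¹ * ∫ ξ in (0:ℝ)..2, √(2 - ξ) * Real.cos (x * ξ) = invFourierSqrtTriangle x := by
  have hconst : (2 * π)⁻¹ * (2 * (π / (2 * x)) * √(π / (2 * x))) / π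
      = (8 * π) ^ (-(1:ℝ)/2) * x ^ (-(3:ℝ)/2) := by
    rw [neg_div, rpow_neg (by positivity), ← Real.sqrt_eq_rpow, neg_div, rpow_neg hx.le,
      show (3:ℝ)/2 = 1 + 1/2 by norm_num, rpow_add hx, rpow_one, ← Real.sqrt_eq_rpow,
      Real.sqrt_div pi_pos.le, Real.sqrt_mul zero_le_two, Real.sqrt_mul (by norm_num),
      show (8:ℝ) = 2 ^ 2 * 2 by norm_num, Real.sqrt_mul (by positivity), Real.sqrt_sq zero_le_two]
    field_simp
    rw [Real.sq_sqrt pi_pos.le]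
  set c := π / (2 * x)
  set z := 2 * √x / √π
  have hz2 : z ^ 2 = 4 * x / π := by
    rw [div_pow, mul_pow, Real.sq_sqrt hx.le, Real.sq_sqrt pi_pos.le]; ring
  have hcz : 2 - c * z ^ 2 = 0 := by rw [hz2, div_mul_div_comm]; field_simp; ring
  have hsub := integral_sqrt_sub_mul_eq_integral_sq_mul (g := fun ξ => Real.cos (x * ξ))
    (by fun_prop) 2 (by positivity : 0 < c) (by positivity : 0 ≤ z)
  have hphase : π * z ^ 2 / 2 = 2 * x := by rw [hz2]; field_simp; ring
  have hcongr : ∀ t : ℝ, t ^ 2 * Real.cos (x * (2 - c * t ^ 2))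
      = t ^ 2 * Real.cos (π * z ^ 2 / 2 - π * t ^ 2 / 2) := by
    intro t; rw [hphase]; congr 2; simp only [c]; field_simp
  rw [hcz, funext hcongr, integral_sq_mul_cos_sub_eq_fresnel, hphase] at hsub
  rw [hsub, invFourierSqrtTriangle, abs_of_pos hx, ← hconst]
  ring

theorem sin_pi_mul_sq_div_two_pos {t : ℝ} (ht₀ : 0 < t) (ht : t < √2) :
    0 < Real.sin (π * t ^ 2 / 2) := by
  have ht2 : t ^ 2 < 2 := by
    simpa [Real.sq_sqrt zero_le_two] using pow_lt_pow_left₀ ht ht₀.le two_ne_zero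
  exact Real.sin_pos_of_pos_of_lt_pi (by positivity) (by nlinarith [pi_pos])

theorem fresnelS_sqrt_two_pos : 0 < fresnelS √2 :=
  intervalIntegral_pos_of_pos_on ((by fun_prop : Continuous _).intervalIntegrable _ _)
    (fun _ ht => sin_pi_mul_sq_div_two_pos ht.1 ht.2) (by positivity)

/- The substitution `t ↦ √(t² + 2)` maps `[0, √2]` onto `[√2, 2]` and flips the sign of
`sin (π t² / 2)`, so the negative lobe of `fresnelS` on `[√2, 2]` is dominated by the
positive one on `[0, √2]`. -/
theorem fresnelS_two_eq :
    fresnelS 2 = ∫ t in (0:ℝ)..√2, Real.sin (π * t ^ 2 / 2) * (1 - t / √(t ^ 2 + 2)) := by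
  have hφ : ∀ t ∈ Set.uIcc 0 √2, HasDerivAt (fun t => √(t ^ 2 + 2)) (t / √(t ^ 2 + 2)) t := by
    intro t _
    refine (((hasDerivAt_pow 2 t).add_const 2).sqrt (by positivity)).congr_deriv ?_
    field_simp
    norm_num
  have hφ' : Continuous fun t : ℝ => t / √(t ^ 2 + 2) :=
    by fun_prop (disch := exact fun t => by positivity)
  have hcont : Continuous fun t => Real.sin (π * t ^ 2 / 2) := by fun_prop
  have hsub := integral_comp_mul_deriv hφ hφ'.continuousOn hcont
  have hends : √((0:ℝ) ^ 2 + 2) = √2 ∧ √(√2 ^ 2 + 2) = 2 := by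
    refine ⟨by norm_num, ?_⟩
    rw [Real.sq_sqrt zero_le_two, show (2:ℝ) + 2 = 2 ^ 2 by norm_num, Real.sqrt_sq zero_le_two]
  have hflip : ∀ t : ℝ, Real.sin (π * √(t ^ 2 + 2) ^ 2 / 2) = -Real.sin (π * t ^ 2 / 2) := by
    intro t
    rw [Real.sq_sqrt (by positivity), ← Real.sin_add_pi]
    ring_nf
  simp only [Function.comp_def, hends, hflip, neg_mul] at hsub
  rw [fresnelS, ← integral_add_adjacent_intervals (hcont.intervalIntegrable 0 √2)
    (hcont.intervalIntegrable √2 2), ← hsub, intervalIntegral.integral_neg, ← sub_eq_add_neg,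
    ← integral_sub (hcont.intervalIntegrable 0 √2)]
  · congr 1 with t
    ring
  · exact (hcont.mul hφ').intervalIntegrable _ _

theorem fresnelS_two_pos : 0 < fresnelS 2 := by
  rw [fresnelS_two_eq]
  refine intervalIntegral_pos_of_pos_on (Continuous.intervalIntegrable
    (by fun_prop (disch := exact fun t => by positivity)) _ _) (fun t ht => ?_) (by positivity)
  have hlt : t < √(t ^ 2 + 2) := Real.lt_sqrt_of_sq_lt (by linarith)
  exact mul_pos (sin_pi_mul_sq_div_two_pos ht.1 ht.2)
    (sub_pos.2 ((div_lt_one (by positivity)).2 hlt))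

theorem invFourierSqrtTriangle_pi_div_two_pos : 0 < invFourierSqrtTriangle (π / 2) := by
  have hz : 2 * √(π / 2) / √π = √2 := by
    rw [Real.sqrt_div pi_pos.le]
    field_simp
    rw [Real.sq_sqrt zero_le_two]
  rw [invFourierSqrtTriangle, abs_of_pos (by positivity), hz,
    show 2 * (π / 2) = π by ring, Real.cos_pi, Real.sin_pi]
  have := fresnelS_sqrt_two_pos
  simp only [neg_neg, one_mul, zero_mul, add_zero]
  positivity

theorem invFourierSqrtTriangle_pi_neg : invFourierSqrtTriangle π < 0 := by
  rw [invFourierSqrtTriangle, abs_of_pos pi_pos, mul_div_assoc, div_self (by positivity),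
    Real.cos_two_pi, Real.sin_two_pi]
  have := fresnelS_two_pos
  simp only [mul_one, zero_mul, add_zero, neg_mul, one_mul, mul_neg, neg_lt_zero]
  positivity

theorem invFourierSqrtTriangle_abs (x : ℝ) :
    invFourierSqrtTriangle |x| = invFourierSqrtTriangle x := by
  simp only [invFourierSqrtTriangle, abs_abs]

theorem sqrt_triangle_inverse_fourier :
    (∀ x : ℝ, x ≠ 0 →
        (2 * Real.pi : ℂ)⁻¹ *
            ∫ ξ in (-2:ℝ)..2,
              (((1/2) * Real.sqrt (2 - |ξ|) : ℝ) : ℂ) * Complex.exp (Complex.I * x * ξ)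
          = (invFourierSqrtTriangle x : ℂ))
    ∧ (∃ x₁ x₂ : ℝ, 0 < invFourierSqrtTriangle x₁ ∧ invFourierSqrtTriangle x₂ < 0) := by
  refine ⟨fun x hx => ?_, π / 2, π, invFourierSqrtTriangle_pi_div_two_pos,
    invFourierSqrtTriangle_pi_neg⟩
  have hcos_abs : ∀ ξ, √(2 - ξ) * Real.cos (x * ξ) = √(2 - ξ) * Real.cos (|x| * ξ) := by
    intro ξ
    rcases abs_choice x with h | h <;> simp [h]
  rw [integral_comp_abs_mul_exp_eq (f := fun s => 1 / 2 * √(2 - s)) (by fun_prop) zero_le_two,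
    ← invFourierSqrtTriangle_abs, ← inv_two_pi_mul_integral_sqrt_two_sub_mul_cos (abs_pos.2 hx),
    ← funext hcos_abs]
  simp only [mul_assoc, intervalIntegral.integral_const_mul]
  push_cast
  ring
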